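/- The function J̃ : ℝ → ℝ defined by J̃(v) = (1/4)v² + (1/2)(1 − sgn(v)v⁴)² has a local minimizer at v = 0. -/

import Mathlib

/-- Transformed scalar objective `J̃(v) = (1/4)v² + (1/2)(1 - sgn(v)v⁴)²`. -/
noncomputable def Jt (v : ℝ) : ℝ :=
  1 / 4 * v ^ 2 + 1 / 2 * (1 - Real.sign v * v ^ 4) ^ 2

/-! Since `sgn v ≤ 1` and `(1 - a)² ≥ 1 - 2a`, we get `J̃(v) ≥ 1/2 + v²(1/4 - v²)`, and
`J̃(0) = 1/2`; the quadratic term dominates the quartic one for `|v| < 1/2`. -/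

theorem Real.sign_le_one (r : ℝ) : Real.sign r ≤ 1 := by
  rcases Real.sign_apply_eq r with h | h | h <;> rw [h] <;> norm_num

theorem Jt_zero : Jt 0 = 1 / 2 := by
  simp [Jt]

theorem half_add_sq_mul_le_Jt (v : ℝ) : 1 / 2 + v ^ 2 * (1 / 4 - v ^ 2) ≤ Jt v := by
  have hsign : Real.sign v * v ^ 4 ≤ v ^ 4 :=
    mul_le_of_le_one_left (by positivity) (Real.sign_le_one v)
  unfold Jt
  nlinarith [sq_nonneg (Real.sign v * v ^ 4)]

theorem Jt_zero_le_of_sq_le {v : ℝ} (hv : v ^ 2 ≤ 1 / 4) : Jt 0 ≤ Jt v := by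
  rw [Jt_zero]
  nlinarith [half_add_sq_mul_le_Jt v, sq_nonneg v]

theorem transformed_lhalf_local_min_at_zero :
    ∃ ε > (0 : ℝ), ∀ w : ℝ, |w - 0| < ε → Jt 0 ≤ Jt w := by
  refine ⟨1 / 2, by norm_num, fun w hw => Jt_zero_le_of_sq_le ?_⟩
  rw [sub_zero] at hw
  nlinarith [abs_nonneg w, sq_abs w]
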